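/- arXiv:1808.01046 — 2 statements merged into one kernel-verified Lean document; each statement's English description precedes it below -/
import Mathlib

section
/- Let λ be a partition of n−1 and λ' a partition of n with λ ⊆ λ'. If f : {1,...,n−1} → {1,...,n} is an injection with f_*(I_λ) ⊆ I_{λ'} (where f_* is the inclusion of polynomial rings sending x_i ↦ x_{f(i)}), then I_{λ'} = ⟨x_1,...,x_n⟩, i.e., the quotient R_n/I_{λ'} ≅ ℂ is the trivial representation, which forces λ' to be a single row. -/
open MvPolynomial Finset

variable (F : Type*) [Field F]

/-- The elementary symmetric polynomial `e_i(S)` in the set of variables `S`. -/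
noncomputable def esymS (S : Finset ℕ) (i : ℕ) : MvPolynomial ℕ F :=
  ∑ T ∈ S.powersetCard i, ∏ j ∈ T, X j

/-- Height of column `c` (0-indexed) of the Young diagram with row lengths `l`. -/
def colHeight (l : List ℕ) (c : ℕ) : ℕ := (l.filter (fun r => c < r)).length

/-- Number of non-top-row boxes in the columns strictly to the left of column `c`;
these boxes receive the first labels of the BFR-filling. -/
def bfrOffset (l : List ℕ) (c : ℕ) : ℕ := ∑ c' ∈ Finset.range c, (colHeight l c' - 1)

/-- The BFR-filling labels appearing in column `c`: labels of the non-top boxes of column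
`c` (filled bottom to top, column by column), together with the label `n - c` of its
top-row box (the top row is filled right to left with `n - λ_1 + 1, ..., n`). -/
def bfrLabels (l : List ℕ) (c : ℕ) : Finset ℕ :=
  Finset.Icc (bfrOffset l c + 1) (bfrOffset l c + (colHeight l c - 1)) ∪ {l.sum - c}

/-- The Tanisaki ideal `I_λ`, generated by the Biagioli-Faridi-Rosas generators: for each
box of the BFR-filling labeled `i` whose column has top-row label `j = n - c`, all
elementary symmetric polynomials `e_i(S)` with `S ⊆ {x_1,...,x_n}`, `|S| = j`. -/
noncomputable def tanisaki (l : List ℕ) : Ideal (MvPolynomial ℕ F) :=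
  Ideal.span {p | ∃ c : ℕ, c < l.headD 0 ∧ ∃ i ∈ bfrLabels l c, ∃ S : Finset ℕ,
    S ⊆ Finset.Icc 1 l.sum ∧ S.card = l.sum - c ∧ p = esymS F S i}

/-- `l` is a partition of `n`: weakly decreasing, positive parts, total `n`. -/
def IsPartitionOf (n : ℕ) (l : List ℕ) : Prop :=
  l.Pairwise (· ≥ ·) ∧ (∀ x ∈ l, 0 < x) ∧ l.sum = n

/-! If `λ'` had two rows, every BFR generator of `I_{λ'}` other than `e_1(x_1, …, x_n)` would
have degree at least two, so `I_{λ'}` would be killed by every substitution `x_j ↦ c_j ε` into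
the dual numbers with `∑ c_j = 0`. But `I_λ` contains a sum of variables (`x_1` or
`e_1(x_1, …, x_{n-1})`) whose image under `f_*` involves at most `n - 1` variables; taking
`c_j = 1` except at a missed index `j₀`, where `c_{j₀} = 1 - n`, that image evaluates to a
nonzero multiple of `ε`. So `λ'` is a single row, and then `I_{λ'}` is visibly
`⟨x_1, …, x_n⟩`. -/

open DualNumber

theorem esymS_one (S : Finset ℕ) : esymS F S 1 = ∑ j ∈ S, X j := by
  simp [esymS, powersetCard_one]

theorem aeval_smul_eps_esymS_of_two_le (c : ℕ → F) (S : Finset ℕ) {i : ℕ} (hi : 2 ≤ i) :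
    aeval (fun j => c j • (ε : F[ε])) (esymS F S i) = 0 := by
  rw [esymS, map_sum]
  refine Finset.sum_eq_zero fun T hT => ?_
  rw [map_prod]
  simp only [aeval_X]
  rw [Finset.prod_smul, Finset.prod_const, (Finset.mem_powersetCard.mp hT).2,
    pow_eq_zero_of_le hi eps_pow_two, smul_zero]

theorem aeval_smul_eps_sum_X (c : ℕ → F) (A : Finset ℕ) (g : ℕ → ℕ) :
    aeval (fun j => c j • (ε : F[ε])) (∑ i ∈ A, (X (g i) : MvPolynomial ℕ F)) =
      (∑ i ∈ A, c (g i)) • ε := by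
  simp [Finset.sum_smul]

theorem colHeight_zero {l : List ℕ} (hpos : ∀ x ∈ l, 0 < x) : colHeight l 0 = l.length := by
  rw [colHeight, List.filter_eq_self.mpr]
  simpa using hpos

theorem pos_of_mem_bfrLabels {l : List ℕ} {c i : ℕ} (hc : c < l.headD 0)
    (hi : i ∈ bfrLabels l c) : 0 < i := by
  have hhead : l.headD 0 ≤ l.sum := by cases l <;> simp
  rw [bfrLabels, Finset.mem_union, Finset.mem_Icc, Finset.mem_singleton] at hi
  omega

theorem eq_zero_of_one_mem_bfrLabels {l : List ℕ} (hpos : ∀ x ∈ l, 0 < x) (h2 : 2 ≤ l.length)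
    {c : ℕ} (hc : c < l.headD 0) (h1 : 1 ∈ bfrLabels l c) : c = 0 := by
  have hhead : l.headD 0 < l.sum := by
    rcases l with _ | ⟨a, _ | ⟨b, t⟩⟩
    · simp at h2
    · simp at h2
    · have := hpos b (by simp)
      simp only [List.headD_cons, List.sum_cons]
      omega
  by_contra hc0
  have hoff : colHeight l 0 - 1 ≤ bfrOffset l c :=
    Finset.single_le_sum (f := fun c' => colHeight l c' - 1) (fun _ _ => Nat.zero_le _)
      (Finset.mem_range.mpr (Nat.pos_of_ne_zero hc0))
  rw [colHeight_zero hpos] at hoff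
  rw [bfrLabels, Finset.mem_union, Finset.mem_Icc, Finset.mem_singleton] at h1
  omega

theorem tanisaki_le_ker_aeval_smul_eps {l : List ℕ} (hpos : ∀ x ∈ l, 0 < x)
    (h2 : 2 ≤ l.length) (c : ℕ → F) (hc : ∑ j ∈ Icc 1 l.sum, c j = 0) :
    tanisaki F l ≤ RingHom.ker (aeval (fun j => c j • (ε : F[ε]))) := by
  rw [tanisaki, Ideal.span_le]
  rintro p ⟨k, hk, i, hi, S, hS, hcard, rfl⟩
  rw [SetLike.mem_coe, RingHom.mem_ker]
  obtain rfl | h2i : i = 1 ∨ 2 ≤ i := by have := pos_of_mem_bfrLabels hk hi; omega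
  · obtain rfl := eq_zero_of_one_mem_bfrLabels hpos h2 hk hi
    obtain rfl : S = Icc 1 l.sum := Finset.eq_of_subset_of_card_le hS (by simp [hcard])
    simpa [esymS_one, hc] using aeval_smul_eps_sum_X F c (Icc 1 l.sum) id
  · exact aeval_smul_eps_esymS_of_two_le F c S h2i

theorem sum_X_notMem_tanisaki [CharZero F] {l : List ℕ} (hpos : ∀ x ∈ l, 0 < x)
    (h2 : 2 ≤ l.length) {A : Finset ℕ} (hA : A.Nonempty) {g : ℕ → ℕ} {j₀ : ℕ}
    (hj₀ : j₀ ∈ Icc 1 l.sum) (hg : ∀ i ∈ A, g i ≠ j₀) :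
    ∑ i ∈ A, X (g i) ∉ tanisaki F l := by
  intro hmem
  set c : ℕ → F := fun j => 1 - if j = j₀ then (l.sum : F) else 0
  have hc : ∑ j ∈ Icc 1 l.sum, c j = 0 := by
    simp [c, Finset.sum_sub_distrib, hj₀]
  have hcg : ∑ i ∈ A, c (g i) = A.card := by
    rw [Finset.sum_congr rfl fun i hi => (by simp [c, hg i hi] : c (g i) = 1)]
    simp
  have hzero := tanisaki_le_ker_aeval_smul_eps F hpos h2 c hc hmem
  rw [RingHom.mem_ker, aeval_smul_eps_sum_X, hcg] at hzero
  have := congrArg TrivSqZeroExt.snd hzero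
  simp [hA.ne_empty] at this

theorem tanisaki_singleton (m : ℕ) :
    tanisaki F [m] = Ideal.span ((fun i => X i) '' Set.Icc 1 m) := by
  apply le_antisymm
  · rw [tanisaki, Ideal.span_le]
    rintro p ⟨c, hc, i, hi, S, hS, -, rfl⟩
    have hi0 := pos_of_mem_bfrLabels hc hi
    refine Ideal.sum_mem _ fun T hT => ?_
    obtain ⟨hTS, hTcard⟩ := Finset.mem_powersetCard.mp hT
    obtain ⟨j, hj⟩ := Finset.card_pos.mp (hTcard ▸ hi0)
    refine Ideal.mem_of_dvd _ (Finset.dvd_prod_of_mem _ hj) (Ideal.subset_span ⟨j, ?_, rfl⟩)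
    simpa using hS (hTS hj)
  · rw [Ideal.span_le]
    rintro p ⟨j, hj, rfl⟩
    rw [Set.mem_Icc] at hj
    refine Ideal.subset_span ⟨m - 1, by simp; omega, 1, ?_, {j}, by simpa using hj, by simp; omega,
      by simp [esymS_one]⟩
    exact mem_union_right _ (by simp; omega)

theorem exists_sum_X_mem_tanisaki {l : List ℕ} (hpos : ∀ x ∈ l, 0 < x) (hne : l ≠ []) :
    ∃ A ⊆ Icc 1 l.sum, A.Nonempty ∧ ∑ j ∈ A, X j ∈ tanisaki F l := by
  rcases l with _ | ⟨a, _ | ⟨b, t⟩⟩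
  · exact absurd rfl hne
  · have ha := hpos a (by simp)
    refine ⟨{1}, by simp; omega, singleton_nonempty 1, ?_⟩
    rw [sum_singleton, tanisaki_singleton]
    exact Ideal.subset_span ⟨1, by simp; omega, rfl⟩
  · have ha := hpos a (by simp)
    refine ⟨Icc 1 _, subset_rfl, ⟨1, by simp; omega⟩, ?_⟩
    rw [← esymS_one]
    refine Ideal.subset_span ⟨0, by simpa using ha, 1, ?_, _, subset_rfl, by simp, rfl⟩
    simp [bfrLabels, bfrOffset, colHeight_zero hpos]

theorem eq_singleton_sum_of_length_le_one {l : List ℕ} (hl : l.length ≤ 1) (hne : l ≠ []) :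
    l = [l.sum] := by
  rcases l with _ | ⟨a, _ | ⟨b, t⟩⟩ <;> simp_all

theorem stmt18_general (n : ℕ) (hn : 2 ≤ n) (l l' : List ℕ)
    (hl : IsPartitionOf (n - 1) l) (hl' : IsPartitionOf n l')
    (f : ℕ → ℕ)
    (hpush : ∀ p ∈ tanisaki ℂ l, rename f p ∈ tanisaki ℂ l') :
    tanisaki ℂ l' = Ideal.span ((fun i : ℕ => (X i : MvPolynomial ℕ ℂ)) '' Set.Icc 1 n) ∧
      l'.length = 1 := by
  obtain ⟨-, hpos, hsum⟩ := hl
  obtain ⟨-, hpos', rfl⟩ := hl'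
  rcases le_or_gt l'.length 1 with h1 | h2
  · have hne : l' ≠ [] := by rintro rfl; simp at hn
    rw [eq_singleton_sum_of_length_le_one h1 hne]
    exact ⟨tanisaki_singleton ℂ _, rfl⟩
  exfalso
  have hne : l ≠ [] := by rintro rfl; simp only [List.sum_nil] at hsum; omega
  obtain ⟨A, hA, hAne, hmem⟩ := exists_sum_X_mem_tanisaki ℂ hpos hne
  have hcard : #((Icc 1 l.sum).image f) < #(Icc 1 l'.sum) :=
    card_image_le.trans_lt (by simp; omega)
  obtain ⟨j₀, hj₀, hfj₀⟩ := exists_mem_notMem_of_card_lt_card hcard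
  refine sum_X_notMem_tanisaki ℂ hpos' h2 hAne hj₀ (g := f)
    (fun i hi hfi => hfj₀ (mem_image.mpr ⟨i, hA hi, hfi⟩)) ?_
  simpa [map_sum] using hpush _ hmem

/-- If `λ ⊆ λ'` are partitions of `n-1` and `n`, and `f : {1,...,n-1} → {1,...,n}` is an
injection whose induced inclusion `f_* : x_i ↦ x_{f(i)}` satisfies `f_*(I_λ) ⊆ I_{λ'}`,
then `I_{λ'} = ⟨x_1,...,x_n⟩`; i.e. `R_n/I_{λ'} ≅ ℂ` is trivial, forcing `λ'` to be a
single row. -/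
theorem stmt18 (n : ℕ) (hn : 2 ≤ n) (l l' : List ℕ)
    (hl : IsPartitionOf (n - 1) l) (hl' : IsPartitionOf n l')
    (hsub : ∀ j : ℕ, l.getD j 0 ≤ l'.getD j 0)
    (f : ℕ → ℕ) (hmaps : Set.MapsTo f (Set.Icc 1 (n - 1)) (Set.Icc 1 n))
    (hinj : Set.InjOn f (Set.Icc 1 (n - 1)))
    (hpush : ∀ p ∈ tanisaki ℂ l, rename f p ∈ tanisaki ℂ l') :
    tanisaki ℂ l' = Ideal.span ((fun i : ℕ => (X i : MvPolynomial ℕ ℂ)) '' Set.Icc 1 n) ∧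
      l'.length = 1 :=
  stmt18_general n hn l l' hl hl' f hpush
end

section
/- Let λ be a Young diagram with n−1 boxes and λ' the diagram obtained from λ by adding one box. Let ι_n* : ℚ[x_1,...,x_n] → ℚ[x_1,...,x_{n-1}] be the homomorphism with x_i ↦ x_i for i < n and x_n ↦ 0. Then ι_n*(I_{λ'}) ⊆ I_λ, where I_λ and I_{λ'} are the Tanisaki ideals. -/
open MvPolynomial Finset

variable (F : Type*) [Field F]

/-! Specializing `x_n ↦ 0` sends a generator `e_i(S)` of `I_{λ'}` from column `c` to
`e_i(S \ {n})`, and `|S \ {n}| ≥ n - 1 - c`. A label `i ≤ n - 1` of the filling of `λ'` also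
occurs in the filling of `λ`, in a column `c'` whose top label `n - 1 - c'` is at most
`max i (n - 1 - c)`: non-top labels only move to the same or a later column, and the top
label `n - c` of `λ'` is the top label of column `c - 1` of `λ`. Finally, since
`∑_{a ∈ S} e_i(S \ {a}) = (|S| - i) e_i(S)`, in characteristic zero an ideal containing every
`e_i(T)` with `|T| = j ≥ i` contains every `e_i(S)` with `|S| ≥ j`. -/

lemma Finset.powersetCard_filter {α : Type*} (s : Finset α) (p : α → Prop) [DecidablePred p]
    (n : ℕ) :
    (s.filter p).powersetCard n = (s.powersetCard n).filter (fun t => ∀ x ∈ t, p x) := by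
  ext t
  simp only [mem_powersetCard, mem_filter, subset_iff]
  grind

lemma Finset.filter_lt_eq_erase {S : Finset ℕ} {n : ℕ} (h : ∀ x ∈ S, x ≤ n) :
    S.filter (· < n) = S.erase n := by
  ext x
  have := h x
  simp only [mem_filter, mem_erase]
  grind

variable {F}

lemma esymS_eq_zero_of_card_lt {S : Finset ℕ} {i : ℕ} (h : S.card < i) : esymS F S i = 0 := by
  simp [esymS, powersetCard_eq_empty.mpr h]

lemma aeval_esymS (n : ℕ) (S : Finset ℕ) (i : ℕ) :
    aeval (fun j : ℕ => if j < n then X j else (0 : MvPolynomial ℕ F)) (esymS F S i) =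
      esymS F (S.filter (· < n)) i := by
  simp only [esymS, map_sum, map_prod, aeval_X, prod_ite_zero, powersetCard_filter,
    sum_filter]

lemma sum_esymS_erase (S : Finset ℕ) (i : ℕ) :
    ∑ a ∈ S, esymS F (S.erase a) i = (S.card - i) • esymS F S i := by
  simp only [esymS, ← filter_ne', powersetCard_filter, sum_filter, smul_sum]
  rw [sum_comm]
  refine sum_congr rfl fun T hT => ?_
  obtain ⟨hTS, rfl⟩ := mem_powersetCard.mp hT
  rw [← sum_filter, sum_const, ← card_sdiff_of_subset hTS]
  congr 2
  ext a
  simp only [mem_filter, mem_sdiff]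
  grind

lemma colHeight_cons (a : ℕ) (l : List ℕ) (c : ℕ) :
    colHeight (a :: l) c = (if c < a then 1 else 0) + colHeight l c := by
  by_cases h : c < a <;> simp [colHeight, h, add_comm]

lemma colHeight_pos {l : List ℕ} {c : ℕ} (h : c < l.headD 0) : 0 < colHeight l c := by
  cases l with
  | nil => simp at h
  | cons a t => simp_all [colHeight_cons]

lemma colHeight_le_colHeight {l l' : List ℕ} (hp : ∀ x ∈ l, 0 < x)
    (hsub : ∀ j, l.getD j 0 ≤ l'.getD j 0) (c : ℕ) : colHeight l c ≤ colHeight l' c := by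
  induction l generalizing l' with
  | nil => simp [colHeight]
  | cons a t ih =>
    have ha := hp a List.mem_cons_self
    cases l' with
    | nil => simpa using (hsub 0).trans_lt' ha
    | cons a' t' =>
      have h0 : a ≤ a' := by simpa using hsub 0
      have ht := ih (fun x hx => hp x (List.mem_cons_of_mem a hx))
        (fun j => by simpa using hsub (j + 1))
      rw [colHeight_cons, colHeight_cons]
      split_ifs <;> omega

lemma List.le_headD_of_mem {l : List ℕ} (hs : l.Pairwise (· ≥ ·)) {r : ℕ} (hr : r ∈ l) :
    r ≤ l.headD 0 := by
  cases l with
  | nil => simp at hr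
  | cons a t =>
    rcases List.mem_cons.mp hr with rfl | h
    · simp
    · exact (List.pairwise_cons.mp hs).1 r h

lemma List.headD_le_sum (l : List ℕ) : l.headD 0 ≤ l.sum := by
  cases l <;> simp

lemma List.headD_le_headD {l l' : List ℕ} (hsub : ∀ j, l.getD j 0 ≤ l'.getD j 0) :
    l.headD 0 ≤ l'.headD 0 := by
  simpa [List.getD_eq_getElem?_getD, List.headD_eq_head?, List.head?_eq_getElem?] using hsub 0

lemma sum_range_colHeight {l : List ℕ} {m : ℕ} (h : ∀ r ∈ l, r ≤ m) :
    ∑ c ∈ range m, colHeight l c = l.sum := by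
  induction l with
  | nil => simp [colHeight]
  | cons a t ih =>
    simp only [colHeight_cons, sum_add_distrib, List.sum_cons,
      ih fun r hr => h r (List.mem_cons_of_mem a hr), sum_boole, Nat.cast_id]
    congr 1
    rw [← card_range a]
    congr 1
    ext c
    simpa using fun hc => hc.trans_le (h a List.mem_cons_self)

lemma bfrOffset_succ (l : List ℕ) (c : ℕ) :
    bfrOffset l (c + 1) = bfrOffset l c + (colHeight l c - 1) :=
  sum_range_succ _ c

lemma bfrOffset_mono (l : List ℕ) : Monotone (bfrOffset l) :=
  fun _ _ h => sum_le_sum_of_subset (range_subset_range.mpr h)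

lemma bfrOffset_le_bfrOffset {l l' : List ℕ} (hp : ∀ x ∈ l, 0 < x)
    (hsub : ∀ j, l.getD j 0 ≤ l'.getD j 0) (c : ℕ) : bfrOffset l c ≤ bfrOffset l' c :=
  sum_le_sum fun c' _ => Nat.sub_le_sub_right (colHeight_le_colHeight hp hsub c') 1

lemma bfrOffset_headD_add {l : List ℕ} (hs : l.Pairwise (· ≥ ·)) :
    bfrOffset l (l.headD 0) + l.headD 0 = l.sum := by
  calc bfrOffset l (l.headD 0) + l.headD 0
      = ∑ c ∈ range (l.headD 0), (colHeight l c - 1 + 1) := by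
        rw [bfrOffset, sum_add_distrib, sum_const, card_range, smul_eq_mul, mul_one]
    _ = ∑ c ∈ range (l.headD 0), colHeight l c :=
        sum_congr rfl fun c hc => Nat.sub_add_cancel (colHeight_pos (mem_range.mp hc))
    _ = l.sum := sum_range_colHeight fun r hr => List.le_headD_of_mem hs hr

lemma exists_bfrOffset_lt_le (l : List ℕ) {i k : ℕ} (hi : 0 < i) (hk : i ≤ bfrOffset l k) :
    ∃ c < k, bfrOffset l c < i ∧ i ≤ bfrOffset l (c + 1) := by
  induction k with
  | zero => simp [bfrOffset] at hk; omega
  | succ k ih =>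
    by_cases h : i ≤ bfrOffset l k
    · obtain ⟨c, hc, hlt, hle⟩ := ih h
      exact ⟨c, by omega, hlt, hle⟩
    · exact ⟨k, by omega, by omega, hk⟩

lemma mem_bfrLabels {l : List ℕ} {c i : ℕ} :
    i ∈ bfrLabels l c ↔ (bfrOffset l c < i ∧ i ≤ bfrOffset l (c + 1)) ∨ i = l.sum - c := by
  rw [bfrLabels, mem_union, mem_Icc, mem_singleton, bfrOffset_succ, Nat.succ_le_iff]

lemma le_sum_sub_of_mem_bfrLabels {l : List ℕ} (hs : l.Pairwise (· ≥ ·)) {c i : ℕ}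
    (hc : c < l.headD 0) (hi : i ∈ bfrLabels l c) : i ≤ l.sum - c := by
  have hm := bfrOffset_headD_add hs
  have hmono := bfrOffset_mono l (show c + 1 ≤ l.headD 0 by omega)
  rcases mem_bfrLabels.mp hi with ⟨-, hle⟩ | rfl <;> omega

lemma exists_mem_bfrLabels_of_addBox {N : ℕ} {l l' : List ℕ} (hl : IsPartitionOf N l)
    (hl' : IsPartitionOf (N + 1) l') (hsub : ∀ j, l.getD j 0 ≤ l'.getD j 0) {c i : ℕ}
    (hc : c < l'.headD 0) (hi : i ∈ bfrLabels l' c) (hiN : i ≤ N) :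
    ∃ c' < l.headD 0, i ∈ bfrLabels l c' ∧ N - c' ≤ max i (N - c) := by
  obtain ⟨hs, hp, hsum⟩ := hl
  obtain ⟨hs', -, hsum'⟩ := hl'
  have hm := bfrOffset_headD_add hs
  have hm' := bfrOffset_headD_add hs'
  have hmm' := List.headD_le_headD hsub
  have hoff := bfrOffset_le_bfrOffset hp hsub
  have hmono' := bfrOffset_mono l'
  have hm'm : l'.headD 0 ≤ l.headD 0 + 1 := by
    have := hmono' hmm'
    have := hoff (l.headD 0)
    omega
  simp only [mem_bfrLabels, hsum, hsum'] at hi hm hm' ⊢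
  rcases hi with ⟨hlo, hhi⟩ | rfl
  · have hhi' := hhi.trans (hmono' (show c + 1 ≤ l'.headD 0 by omega))
    by_cases hsmall : i ≤ bfrOffset l (l.headD 0)
    · obtain ⟨c', hc', hlt, hle⟩ := exists_bfrOffset_lt_le l (by omega) hsmall
      have hcc' : c ≤ c' := by
        by_contra! h
        have := bfrOffset_mono l (show c' + 1 ≤ c by omega)
        have := hoff c
        omega
      exact ⟨c', hc', Or.inl ⟨hlt, hle⟩, by omega⟩
    -- here `λ'_1 = λ_1` and `i` is the top label of the last column of `λ`
    · exact ⟨l.headD 0 - 1, by omega, Or.inr (by omega), by omega⟩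
  · exact ⟨c - 1, by omega, Or.inr (by omega), by omega⟩

section Ideal

variable [CharZero F] {I : Ideal (MvPolynomial ℕ F)} {i : ℕ}

lemma esymS_mem_of_forall_erase_mem {S : Finset ℕ} (hi : i < S.card)
    (h : ∀ a ∈ S, esymS F (S.erase a) i ∈ I) : esymS F S i ∈ I := by
  have hsum : ((S.card - i : ℕ) : F) • esymS F S i ∈ I := by
    rw [Nat.cast_smul_eq_nsmul, ← sum_esymS_erase]
    exact I.sum_mem h
  exact (Submodule.smul_mem_iff I (by exact_mod_cast (Nat.sub_pos_of_lt hi).ne')).mp hsum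

lemma esymS_mem_of_le_card {U : Finset ℕ} {j : ℕ} (hij : i ≤ j)
    (hbase : ∀ T ⊆ U, T.card = j → esymS F T i ∈ I) {S : Finset ℕ} (hSU : S ⊆ U)
    (hjS : j ≤ S.card) : esymS F S i ∈ I := by
  induction S using Finset.strongInduction with
  | H S ih =>
    rcases hjS.eq_or_lt with hj | hj
    · exact hbase S hSU hj.symm
    refine esymS_mem_of_forall_erase_mem (hij.trans_lt hj) fun a ha => ?_
    refine ih _ (erase_ssubset ha) ((erase_subset a S).trans hSU) ?_
    rw [card_erase_of_mem ha]
    omega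

lemma esymS_mem_tanisaki {l : List ℕ} (hs : l.Pairwise (· ≥ ·)) {c : ℕ} (hc : c < l.headD 0) (hi : i ∈ bfrLabels l c)
    {S : Finset ℕ} (hS : S ⊆ Icc 1 l.sum) (hcard : l.sum - c ≤ S.card) :
    esymS F S i ∈ tanisaki F l := by
  refine esymS_mem_of_le_card (le_sum_sub_of_mem_bfrLabels hs hc hi)
    (fun T hT hTc => Ideal.subset_span ?_) hS hcard
  exact ⟨c, hc, i, hi, T, hT, hTc, rfl⟩

end Ideal

theorem stmt19_general (n : ℕ) (l l' : List ℕ)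
    (hl : IsPartitionOf (n - 1) l) (hl' : IsPartitionOf n l')
    (hsub : ∀ j : ℕ, l.getD j 0 ≤ l'.getD j 0) :
    ∀ p ∈ tanisaki ℚ l',
      (aeval (fun i : ℕ => if i < n then X i else (0 : MvPolynomial ℕ ℚ))) p ∈
        tanisaki ℚ l := by
  suffices tanisaki ℚ l' ≤ (tanisaki ℚ l).comap
      (aeval fun i : ℕ => if i < n then X i else (0 : MvPolynomial ℕ ℚ)) from
    fun p hp => this hp
  refine Ideal.span_le.mpr ?_
  rintro _ ⟨c, hc, i, hi, S, hS, hcard, rfl⟩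
  obtain ⟨hs, hp, hsum⟩ := hl
  have hn : 1 ≤ n := Nat.one_le_of_lt <| hc.trans_le ((List.headD_le_sum l').trans_eq hl'.2.2)
  rw [hl'.2.2] at hS hcard
  rw [SetLike.mem_coe, Ideal.mem_comap, aeval_esymS,
    filter_lt_eq_erase fun x hx => (mem_Icc.mp (hS hx)).2]
  have hT : S.erase n ⊆ Icc 1 l.sum := fun x hx => by
    have := mem_Icc.mp (hS (mem_of_mem_erase hx))
    have := ne_of_mem_erase hx
    rw [hsum, mem_Icc]
    omega
  rcases lt_or_ge (S.erase n).card i with hlt | hle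
  · rw [esymS_eq_zero_of_card_lt hlt]
    exact zero_mem _
  have hTn : (S.erase n).card ≤ n - 1 := by simpa [hsum] using card_le_card hT
  have hTc : S.card - 1 ≤ (S.erase n).card := pred_card_le_card_erase
  obtain ⟨c', hc', hi', hmax⟩ := exists_mem_bfrLabels_of_addBox ⟨hs, hp, hsum⟩
    (by rwa [Nat.sub_add_cancel hn]) hsub hc hi (by omega)
  exact esymS_mem_tanisaki hs hc' hi' hT (by omega)

/-- If `λ'` (a partition of `n`) is obtained from `λ` (a partition of `n-1`) by adding one
box, then under `ι_n* : ℚ[x_1,...,x_n] → ℚ[x_1,...,x_{n-1}]` (`x_i ↦ x_i` for `i < n`,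
`x_n ↦ 0`) the Tanisaki ideals satisfy `ι_n*(I_{λ'}) ⊆ I_λ`. -/
theorem stmt19 (n : ℕ) (hn : 2 ≤ n) (l l' : List ℕ)
    (hl : IsPartitionOf (n - 1) l) (hl' : IsPartitionOf n l')
    (hsub : ∀ j : ℕ, l.getD j 0 ≤ l'.getD j 0) :
    ∀ p ∈ tanisaki ℚ l',
      (aeval (fun i : ℕ => if i < n then X i else (0 : MvPolynomial ℕ ℚ))) p ∈
        tanisaki ℚ l :=
  stmt19_general n l l' hl hl' hsub
end
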